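/- Let γ ∈ (0,1), q ∈ [0, 1/2), and τ ∈ [0, 1/2). Let (X_n)_{n ∈ ℕ} be a sequence of independent standard normal random variables on a probability space (Ω, P) and let (Δ_n)_{n ∈ ℕ} be random variables with |Δ_n| ≤ q almost surely for every n and such that, for every n, the vector (Δ_1, …, Δ_n) is independent of (X_1, …, X_n). Then lim_{n → ∞} P(|∑_{i=1}^n (1 + Δ_i + X_i)| > √n · λ_γ(τ√n)) = 1. (The detection probabilities of the RDT decisions tend to 1 as the number of observations grows; hence a decision dominating all RDT decisions in detection probability is an oracle.) -/

import Mathlib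

open MeasureTheory ProbabilityTheory Real Filter

/-- The cumulative distribution function `Φ` of the standard normal law `N(0,1)`. -/
noncomputable def Phi (x : ℝ) : ℝ := ((gaussianReal 0 1) (Set.Iic x)).toReal

/-- The inverse `Φ⁻¹` of the standard normal cdf (on `(0,1)`). -/
noncomputable def PhiInv (y : ℝ) : ℝ := Function.invFun Phi y

/-!
Since `γ > 0` and `Φ → 1`, the root `λ_γ(a)` exceeds `a` by at most a constant, so the critical
value `√n λ_γ(τ√n)` is at most `(τ + o(1)) n`. The drift of the sum, `∑ (1 + Δ_i) ≥ (1 - q) n`,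
beats this by a linear margin because `q + τ < 1`, while by the law of large numbers the
Gaussian part `∑ X_i` is `o(n)` in probability.
-/

open Finset Topology

lemma Phi_eq_cdf : Phi = cdf (gaussianReal 0 1) :=
  funext fun x => (cdf_eq_real _ x).symm

lemma exists_le_add_of_two_sub_Phi_eq {γ : ℝ} (hγ : 0 < γ) :
    ∃ c, ∀ a x, 0 ≤ a → 2 - Phi (x - a) - Phi (x + a) = γ → x ≤ a + c := by
  rw [Phi_eq_cdf]
  obtain ⟨c, hc⟩ : ∃ c, 1 - γ / 2 < cdf (gaussianReal 0 1) c :=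
    ((tendsto_cdf_atTop _).eventually (eventually_gt_nhds (by linarith))).exists
  refine ⟨c, fun a x ha hx => ?_⟩
  by_contra! h
  have hleft := monotone_cdf (gaussianReal 0 1) (show c ≤ x - a by linarith)
  have hright := monotone_cdf (gaussianReal 0 1) (show x - a ≤ x + a by linarith)
  linarith

lemma eventually_sqrt_mul_le_of_le_add {lam : ℝ → ℝ} {τ c δ : ℝ} (hτ : 0 ≤ τ) (hδ : 0 < δ)
    (hlam : ∀ a, 0 ≤ a → lam a ≤ a + c) :
    ∀ᶠ n : ℕ in atTop, √n * lam (τ * √n) ≤ (τ + δ) * n := by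
  have hsqrt : Tendsto (fun n : ℕ => √(n : ℝ)) atTop atTop :=
    tendsto_sqrt_atTop.comp tendsto_natCast_atTop_atTop
  filter_upwards [(hsqrt.const_mul_atTop hδ).eventually_ge_atTop c] with n hn
  have hn_sq : √(n : ℝ) * √n = n := Real.mul_self_sqrt n.cast_nonneg
  calc √n * lam (τ * √n) ≤ √n * (τ * √n + c) :=
        mul_le_mul_of_nonneg_left (hlam _ (by positivity)) (sqrt_nonneg _)
    _ = τ * (√n * √n) + c * √n := by ring
    _ ≤ τ * (√n * √n) + δ * √n * √n := by gcongr
    _ = (τ + δ) * n := by rw [mul_assoc, ← add_mul, hn_sq]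

lemma le_abs_sum_div_of_abs_sum_one_add_add_le {n : ℕ} (hn : 0 < n) {q ε : ℝ} {δ x : ℕ → ℝ}
    (hδ : ∀ i, -q ≤ δ i) (h : |∑ i ∈ range n, (1 + δ i + x i)| ≤ (1 - q - ε) * n) :
    ε ≤ |(∑ i ∈ range n, x i) / n| := by
  have hδsum : -q * n ≤ ∑ i ∈ range n, δ i := by
    simpa [mul_comm] using card_nsmul_le_sum (range n) δ (-q) fun i _ => hδ i
  have hsum := (le_abs_self _).trans h
  rw [sum_add_distrib, sum_add_distrib, sum_const, card_range, nsmul_one] at hsum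
  rw [abs_div, Nat.abs_cast, le_div_iff₀ (Nat.cast_pos.2 hn)]
  exact (by linarith : ε * n ≤ -∑ i ∈ range n, x i).trans (neg_le_abs _)

theorem tendstoInMeasure_sum_div_of_identDistrib {Ω : Type*} {mΩ : MeasurableSpace Ω}
    {μ : Measure Ω} [IsProbabilityMeasure μ] (X : ℕ → Ω → ℝ) (hint : Integrable (X 0) μ)
    (hindep : Pairwise fun i j => IndepFun (X i) (X j) μ)
    (hident : ∀ i, IdentDistrib (X i) (X 0) μ μ) :
    TendstoInMeasure μ (fun n ω => (∑ i ∈ range n, X i ω) / n) atTop (fun _ => μ[X 0]) :=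
  tendstoInMeasure_of_tendsto_ae
    (fun _ => ((aemeasurable_fun_sum _ fun i _ => (hident i).aemeasurable_fst).div_const _)
      |>.aestronglyMeasurable)
    (strong_law_ae_real X hint hindep hident)

lemma ProbabilityTheory.HasLaw.integrable_of_gaussianReal {Ω : Type*} {mΩ : MeasurableSpace Ω}
    {P : Measure Ω} {X : Ω → ℝ} {m : ℝ} {v : NNReal} (hX : HasLaw X (gaussianReal m v) P) :
    Integrable X P := by
  rw [← Function.id_comp X, ← integrable_map_measure aestronglyMeasurable_id hX.aemeasurable,
    hX.map_eq]
  exact (memLp_id_gaussianReal 1).integrable le_rfl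

lemma tendsto_measure_of_tendsto_measure_compl {Ω ι : Type*} {mΩ : MeasurableSpace Ω}
    {μ : Measure Ω} [IsProbabilityMeasure μ] {l : Filter ι} {s : ι → Set Ω}
    (h : Tendsto (fun i => μ (s i)ᶜ) l (𝓝 0)) : Tendsto (fun i => μ (s i)) l (𝓝 1) := by
  have hlower : ∀ i, 1 - μ (s i)ᶜ ≤ μ (s i) := fun i => by
    rw [tsub_le_iff_right, ← measure_univ (μ := μ), ← Set.union_compl_self (s i)]
    exact measure_union_le _ _
  have h' := ENNReal.Tendsto.sub tendsto_const_nhds h (Or.inl ENNReal.one_ne_top)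
  rw [tsub_zero] at h'
  exact tendsto_of_tendsto_of_tendsto_of_le_of_le h' tendsto_const_nhds hlower
    fun _ => prob_le_one

theorem stmt13_general {Ω : Type*} [MeasurableSpace Ω] (P : Measure Ω) [IsProbabilityMeasure P]
    (γ q τ : ℝ) (hγ : γ ∈ Set.Ioo (0 : ℝ) 1)
    (hq : q ∈ Set.Ico (0 : ℝ) (1/2)) (hτ : τ ∈ Set.Ico (0 : ℝ) (1/2))
    (X : ℕ → Ω → ℝ) (hmeas : ∀ i, Measurable (X i))
    (hindep : iIndepFun X P)
    (hdist : ∀ i, Measure.map (X i) P = gaussianReal 0 1)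
    (Δ : ℕ → Ω → ℝ)
    (hΔbnd : ∀ i, ∀ᵐ ω ∂P, |Δ i ω| ≤ q)
    (lam : ℝ → ℝ)
    (hlam : ∀ a : ℝ, 0 ≤ a → 2 - Phi (lam a - a) - Phi (lam a + a) = γ) :
    Filter.Tendsto
      (fun n : ℕ =>
        P {ω | Real.sqrt n * lam (τ * Real.sqrt n) <
          |∑ i ∈ Finset.range n, (1 + Δ i ω + X i ω)|})
      Filter.atTop (nhds 1) := by
  have hlaw : ∀ i, HasLaw (X i) (gaussianReal 0 1) P := fun i => ⟨(hmeas i).aemeasurable, hdist i⟩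
  have hmean : P[X 0] = 0 := by rw [(hlaw 0).integral_eq, integral_id_gaussianReal]
  have hlln := tendstoInMeasure_sum_div_of_identDistrib X (hlaw 0).integrable_of_gaussianReal
    (fun i j hij => hindep.indepFun hij)
    fun i => ⟨(hlaw i).aemeasurable, (hlaw 0).aemeasurable, by rw [hdist, hdist]⟩
  obtain ⟨c, hc⟩ := exists_le_add_of_two_sub_Phi_eq hγ.1
  obtain ⟨ε, hε, hτε⟩ : ∃ ε, 0 < ε ∧ τ + ε = 1 - q - ε :=
    ⟨(1 - q - τ) / 2, by linarith [hq.2, hτ.2], by ring⟩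
  have hthreshold := eventually_sqrt_mul_le_of_le_add hτ.1 hε fun a ha => hc a _ ha (hlam a ha)
  refine tendsto_measure_of_tendsto_measure_compl <|
    tendsto_of_tendsto_of_tendsto_of_le_of_le' tendsto_const_nhds
      (tendstoInMeasure_iff_dist.1 hlln ε hε) (Eventually.of_forall fun _ => zero_le) ?_
  filter_upwards [hthreshold, eventually_gt_atTop 0] with n hn hn0
  refine measure_mono_ae ?_
  filter_upwards [ae_all_iff.2 hΔbnd] with ω hΔω haccept
  show ε ≤ dist _ _
  rw [hmean, Real.dist_0_eq_abs]
  exact le_abs_sum_div_of_abs_sum_one_add_add_le hn0 (fun i => (abs_le.1 (hΔω i)).1)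
    ((not_lt.1 (Set.notMem_of_mem_compl haccept)).trans (hτε ▸ hn))

/-- the detection probabilities of the RDT decisions tend to 1 as the
number of observations grows. -/
theorem stmt13 {Ω : Type*} [MeasurableSpace Ω] (P : Measure Ω) [IsProbabilityMeasure P]
    (γ q τ : ℝ) (hγ : γ ∈ Set.Ioo (0 : ℝ) 1)
    (hq : q ∈ Set.Ico (0 : ℝ) (1/2)) (hτ : τ ∈ Set.Ico (0 : ℝ) (1/2))
    (X : ℕ → Ω → ℝ) (hmeas : ∀ i, Measurable (X i))
    (hindep : iIndepFun X P)
    (hdist : ∀ i, Measure.map (X i) P = gaussianReal 0 1)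
    (Δ : ℕ → Ω → ℝ) (hΔmeas : ∀ i, Measurable (Δ i))
    (hΔbnd : ∀ i, ∀ᵐ ω ∂P, |Δ i ω| ≤ q)
    (hΔX : ∀ n : ℕ,
      IndepFun (fun ω (i : Fin n) => Δ i ω) (fun ω (i : Fin n) => X i ω) P)
    (lam : ℝ → ℝ)
    (hlam : ∀ a : ℝ, 0 ≤ a → 2 - Phi (lam a - a) - Phi (lam a + a) = γ) :
    Filter.Tendsto
      (fun n : ℕ =>
        P {ω | Real.sqrt n * lam (τ * Real.sqrt n) <
          |∑ i ∈ Finset.range n, (1 + Δ i ω + X i ω)|})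
      Filter.atTop (nhds 1) :=
  stmt13_general P γ q τ hγ hq hτ X hmeas hindep hdist Δ hΔbnd lam hlam
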